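/- arXiv:math/0703751 — 10 statements merged into one kernel-verified Lean document; each statement's English description precedes it below -/
import Mathlib

section
/- Noncommutative Cayley–Hamilton theorem for 2×2 matrices: for A = [[a,b],[c,d]] over a noncommutative ring with b and c invertible, define tr₁(A) = a + b d b^{-1}, det₁(A) = b d b^{-1} a - b c, tr₂(A) = d + c a c^{-1}, det₂(A) = c a c^{-1} d - c b. Then A² - diag(tr₁(A), tr₂(A)) · A + diag(det₁(A), det₂(A)) = 0. -/
/-- Noncommutative Cayley–Hamilton theorem for 2×2 matrices:
`A² - diag(tr₁ A, tr₂ A) A + diag(det₁ A, det₂ A) = 0` where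
`tr₁ A = a + b d ⅟b`, `det₁ A = b d ⅟b a - b c`,
`tr₂ A = d + c a ⅟c`, `det₂ A = c a ⅟c d - c b`. -/
theorem noncomm_cayley_hamilton_2x2 (R : Type*) [Ring R] (a b c d : R)
    [Invertible b] [Invertible c] :
    (!![a, b; c, d] : Matrix (Fin 2) (Fin 2) R) ^ 2
      - !![a + b * d * ⅟b, 0; 0, d + c * a * ⅟c] * !![a, b; c, d]
      + !![b * d * ⅟b * a - b * c, 0; 0, c * a * ⅟c * d - c * b] = 0 := by
  have h₀₁ : (a + b * d * ⅟b) * b = a * b + b * d := by rw [add_mul, invOf_mul_cancel_right]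
  have h₁₀ : (d + c * a * ⅟c) * c = c * a + d * c := by
    rw [add_mul, invOf_mul_cancel_right, add_comm]
  rw [sq, Matrix.mul_fin_two, Matrix.mul_fin_two, h₀₁, h₁₀]
  ext i j
  fin_cases i <;> fin_cases j <;> simp <;> noncomm_ring
end

section
/- Quantum Cayley–Hamilton theorem for GL_q(2): if a_{11},a_{12},a_{21},a_{22} satisfy the relations a_{11}a_{12}=q^{-1}a_{12}a_{11}, a_{11}a_{21}=q^{-1}a_{21}a_{11}, a_{12}a_{22}=q^{-1}a_{22}a_{12}, a_{21}a_{22}=q^{-1}a_{22}a_{21}, a_{12}a_{21}=a_{21}a_{12}, a_{11}a_{22}-a_{22}a_{11}=(q^{-1}-q)a_{12}a_{21}, then for A_q = [[a_{11},a_{12}],[a_{21},a_{22}]] one has A_q² - (q^{1/2}a_{11}+q^{-1/2}a_{22})·diag(q^{-1/2}, q^{1/2})·A_q + (a_{11}a_{22}-q^{-1}a_{12}a_{21})·diag(q^{-1}, q) = 0. -/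
/-- Quantum Cayley–Hamilton theorem for `GL_q(2)`: if the `a_{ij}` satisfy the
`GL_q(2)` relations, then
`A_q² - (q^{1/2}a₁₁ + q^{-1/2}a₂₂)·diag(q^{-1/2}, q^{1/2})·A_q
  + (a₁₁a₂₂ - q^{-1}a₁₂a₂₁)·diag(q^{-1}, q) = 0`. -/
theorem quantum_cayley_hamilton (R : Type*) [Ring R] (q s a11 a12 a21 a22 : R)
    [Invertible q] [Invertible s]
    (hs : s * s = q)
    (hqc1 : ∀ x : R, q * x = x * q) (hqc2 : ∀ x : R, s * x = x * s)
    (h1 : a11 * a12 = ⅟q * (a12 * a11))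
    (h2 : a11 * a21 = ⅟q * (a21 * a11))
    (h3 : a12 * a22 = ⅟q * (a22 * a12))
    (h4 : a21 * a22 = ⅟q * (a22 * a21))
    (h5 : a12 * a21 = a21 * a12)
    (h6 : a11 * a22 - a22 * a11 = (⅟q - q) * (a12 * a21)) :
    (!![a11, a12; a21, a22] : Matrix (Fin 2) (Fin 2) R) ^ 2
      - (s * a11 + ⅟s * a22) • ((Matrix.diagonal ![⅟s, s]) * !![a11, a12; a21, a22])
      + (a11 * a22 - ⅟q * (a12 * a21)) • (Matrix.diagonal ![⅟q, q]) = 0 := by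
  have hq' : ∀ x : R, ⅟q * x = x * ⅟q := fun x => by
    calc ⅟q * x = ⅟q * (x * q * ⅟q) := by rw [mul_assoc x q, mul_invOf_self, mul_one]
    _ = x * ⅟q := by rw [← hqc1, ← mul_assoc, ← mul_assoc, invOf_mul_self, one_mul]
  have hs' : ∀ x : R, ⅟s * x = x * ⅟s := fun x => by
    calc ⅟s * x = ⅟s * (x * s * ⅟s) := by rw [mul_assoc x s, mul_invOf_self, mul_one]
    _ = x * ⅟s := by rw [← hqc2, ← mul_assoc, ← mul_assoc, invOf_mul_self, one_mul]
  have hss : ⅟s * ⅟s = ⅟q := by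
    have h0 : (⅟s * ⅟s) * q = 1 := by
      rw [← hs, mul_assoc, ← mul_assoc (⅟s) s s, invOf_mul_self, one_mul, invOf_mul_self]
    calc ⅟s * ⅟s = (⅟s * ⅟s) * (q * ⅟q) := by rw [mul_invOf_self, mul_one]
    _ = ⅟q := by rw [← mul_assoc, h0, one_mul]
  have P1 : ∀ x y : R, (s * x) * (⅟s * y) = x * y := fun x y => by
    rw [hqc2 x, mul_assoc, ← mul_assoc s (⅟s) y, mul_invOf_self, one_mul]
  have P2 : ∀ x y : R, (⅟s * x) * (⅟s * y) = ⅟q * (x * y) := fun x y => by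
    rw [hs' x, mul_assoc, ← mul_assoc (⅟s) (⅟s) y, hss, hq' y, ← mul_assoc x y, ← hq']
  have P3 : ∀ x y : R, (s * x) * (s * y) = q * (x * y) := fun x y => by
    rw [hqc2 x, mul_assoc, ← mul_assoc s s y, hs, hqc1 y, ← mul_assoc x y, ← hqc1]
  have P4 : ∀ x y : R, (⅟s * x) * (s * y) = x * y := fun x y => by
    rw [hs' x, mul_assoc, ← mul_assoc (⅟s) s y, invOf_mul_self, one_mul]
  have h6' : a11 * a22 = (⅟q - q) * (a12 * a21) + a22 * a11 := sub_eq_iff_eq_add.mp h6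
  have key2 : ⅟q * (a11 * a22)
      = ⅟q * (a22 * a11) + ⅟q * (⅟q * (a12 * a21)) - a12 * a21 := by
    rw [h6', mul_add, ← mul_assoc (⅟q) _ (a12 * a21), mul_sub, invOf_mul_self, sub_mul,
      one_mul, mul_assoc]
    abel
  ext i j
  fin_cases i <;> fin_cases j <;>
    simp [pow_two, Matrix.mul_apply, Fin.sum_univ_two, Matrix.diagonal, Matrix.one_apply]
  · -- (0,0)
    rw [add_mul, P1, P2, sub_mul, ← hq' (a11 * a22), ← hq' (⅟q * (a12 * a21)), key2]
    abel
  · -- (0,1)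
    rw [add_mul, P1, P2, ← h3]
    abel
  · -- (1,0)
    rw [add_mul, P3, P4, h2, ← mul_assoc, mul_invOf_self, one_mul]
    abel
  · -- (1,1)
    rw [add_mul, P3, P4, sub_mul, hq' (a12 * a21), mul_assoc (a12 * a21) (⅟q) q,
      invOf_mul_self, mul_one, ← hqc1 (a11 * a22), h5]
    abel
end

section
/- For the quantum matrix A_q of GL_q(2), the noncommutative characteristic polynomial for the first row is Φ₁(λ) = λ² - (a_{11} + q^{-1}a_{22})λ + q^{-1}a_{11}a_{22} - q^{-2}a_{12}a_{21}, i.e. A_q² - (a_{11}+q^{-1}a_{22})A_q + (q^{-1}a_{11}a_{22} - q^{-2}a_{12}a_{21})I has zero first row. -/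
section FinTwo

variable {R : Type*} [Ring R] (a b c d s t : R)

theorem Matrix.fin_two_sq_sub_smul_add_smul_one_apply_zero_zero :
    (!![a, b; c, d] ^ 2 - s • !![a, b; c, d] + t • (1 : Matrix (Fin 2) (Fin 2) R)) 0 0
      = a * a + b * c - s * a + t := by
  simp [sq]

theorem Matrix.fin_two_sq_sub_smul_add_smul_one_apply_zero_one :
    (!![a, b; c, d] ^ 2 - s • !![a, b; c, d] + t • (1 : Matrix (Fin 2) (Fin 2) R)) 0 1
      = a * b + b * d - s * b := by
  simp [sq]

end FinTwo

theorem quantum_char_poly_first_row_general (R : Type*) [Ring R] (q a11 a12 a21 a22 : R)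
    [Invertible q]
    (h3 : a12 * a22 = ⅟q * (a22 * a12))
    (h6 : a11 * a22 - a22 * a11 = (⅟q - q) * (a12 * a21)) :
    ∀ j : Fin 2,
      ((!![a11, a12; a21, a22] : Matrix (Fin 2) (Fin 2) R) ^ 2
        - (a11 + ⅟q * a22) • !![a11, a12; a21, a22]
        + (⅟q * (a11 * a22) - ⅟q * ⅟q * (a12 * a21)) • (1 : Matrix (Fin 2) (Fin 2) R))
        0 j = 0 := by
  refine Fin.forall_fin_two.mpr ⟨?_, ?_⟩
  · have hcomm : ⅟q * (a11 * a22 - a22 * a11) = ⅟q * ⅟q * (a12 * a21) - a12 * a21 := by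
      rw [h6, ← mul_assoc, mul_sub, invOf_mul_self, sub_mul, one_mul]
    calc _ = ⅟q * (a11 * a22 - a22 * a11) - (⅟q * ⅟q * (a12 * a21) - a12 * a21) := by
          rw [Matrix.fin_two_sq_sub_smul_add_smul_one_apply_zero_zero]; noncomm_ring
      _ = 0 := by rw [hcomm, sub_self]
  · calc _ = a12 * a22 - ⅟q * (a22 * a12) := by
          rw [Matrix.fin_two_sq_sub_smul_add_smul_one_apply_zero_one]; noncomm_ring
      _ = 0 := sub_eq_zero.mpr h3

/-- The noncommutative characteristic polynomial of the quantum matrix `A_q`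
for the first row: `A_q² - (a₁₁ + q⁻¹a₂₂)A_q + (q⁻¹a₁₁a₂₂ - q⁻²a₁₂a₂₁)I`
has zero first row. -/
theorem quantum_char_poly_first_row (R : Type*) [Ring R] (q a11 a12 a21 a22 : R)
    [Invertible q]
    (hqc : ∀ x : R, q * x = x * q)
    (h1 : a11 * a12 = ⅟q * (a12 * a11))
    (h2 : a11 * a21 = ⅟q * (a21 * a11))
    (h3 : a12 * a22 = ⅟q * (a22 * a12))
    (h4 : a21 * a22 = ⅟q * (a22 * a21))
    (h5 : a12 * a21 = a21 * a12)
    (h6 : a11 * a22 - a22 * a11 = (⅟q - q) * (a12 * a21)) :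
    ∀ j : Fin 2,
      ((!![a11, a12; a21, a22] : Matrix (Fin 2) (Fin 2) R) ^ 2
        - (a11 + ⅟q * a22) • !![a11, a12; a21, a22]
        + (⅟q * (a11 * a22) - ⅟q * ⅟q * (a12 * a21)) • (1 : Matrix (Fin 2) (Fin 2) R))
        0 j = 0 :=
  quantum_char_poly_first_row_general R q a11 a12 a21 a22 h3 h6
end

section
/- For the quantum matrix A_q of GL_q(2), the noncommutative characteristic polynomial for the second row is Φ₂(λ) = λ² - (q a_{11} + a_{22})λ + q a_{11}a_{22} - a_{12}a_{21}, i.e. A_q² - (q a_{11}+a_{22})A_q + (q a_{11}a_{22} - a_{12}a_{21})I has zero second row. -/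
namespace Matrix

variable {R : Type*} [Ring R]

theorem sq_sub_smul_add_smul_one_fin_two_apply_one_zero (a b c d t s : R) :
    (!![a, b; c, d] ^ 2 - t • !![a, b; c, d] + s • (1 : Matrix (Fin 2) (Fin 2) R)) 1 0
      = c * a + d * c - t * c := by
  simp [sq]

theorem sq_sub_smul_add_smul_one_fin_two_apply_one_one (a b c d t s : R) :
    (!![a, b; c, d] ^ 2 - t • !![a, b; c, d] + s • (1 : Matrix (Fin 2) (Fin 2) R)) 1 1
      = c * b + d * d - t * d + s := by
  simp [sq]

end Matrix

theorem quantum_char_poly_second_row_general (R : Type*) [Ring R] (q a11 a12 a21 a22 : R)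
    [Invertible q]
    (h2 : a11 * a21 = ⅟q * (a21 * a11))
    (h5 : a12 * a21 = a21 * a12) :
    ∀ j : Fin 2,
      ((!![a11, a12; a21, a22] : Matrix (Fin 2) (Fin 2) R) ^ 2
        - (q * a11 + a22) • !![a11, a12; a21, a22]
        + (q * (a11 * a22) - a12 * a21) • (1 : Matrix (Fin 2) (Fin 2) R))
        1 j = 0 := by
  have hq : q * (a11 * a21) = a21 * a11 := by rw [h2, mul_invOf_cancel_left]
  refine Fin.forall_fin_two.2 ⟨?_, ?_⟩
  · rw [Matrix.sq_sub_smul_add_smul_one_fin_two_apply_one_zero, add_mul, mul_assoc, hq]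
    abel
  · rw [Matrix.sq_sub_smul_add_smul_one_fin_two_apply_one_one, h5]
    noncomm_ring

/-- The noncommutative characteristic polynomial of the quantum matrix `A_q`
for the second row: `A_q² - (q a₁₁ + a₂₂)A_q + (q a₁₁a₂₂ - a₁₂a₂₁)I`
has zero second row. -/
theorem quantum_char_poly_second_row (R : Type*) [Ring R] (q a11 a12 a21 a22 : R)
    [Invertible q]
    (hqc : ∀ x : R, q * x = x * q)
    (h1 : a11 * a12 = ⅟q * (a12 * a11))
    (h2 : a11 * a21 = ⅟q * (a21 * a11))
    (h3 : a12 * a22 = ⅟q * (a22 * a12))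
    (h4 : a21 * a22 = ⅟q * (a22 * a21))
    (h5 : a12 * a21 = a21 * a12)
    (h6 : a11 * a22 - a22 * a11 = (⅟q - q) * (a12 * a21)) :
    ∀ j : Fin 2,
      ((!![a11, a12; a21, a22] : Matrix (Fin 2) (Fin 2) R) ^ 2
        - (q * a11 + a22) • !![a11, a12; a21, a22]
        + (q * (a11 * a22) - a12 * a21) • (1 : Matrix (Fin 2) (Fin 2) R))
        1 j = 0 :=
  quantum_char_poly_second_row_general R q a11 a12 a21 a22 h2 h5
end

section
/- Noncommutative Vandermonde factorization for degree 2: for x₁, x₂, z in a ring with x₂ - x₁ invertible, the Vandermonde quasideterminant V(x₁,x₂,z) = z² - (y₁+y₂)z + y₂y₁ where y₁ = x₁ and y₂ = (x₂-x₁)x₂(x₂-x₁)^{-1}. In particular, V(x₁,x₂,x₁) = 0 and V(x₁,x₂,x₂) = 0, i.e. x₁ and x₂ are both roots of the left polynomial z² - (y₁+y₂)z + y₂y₁. -/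
/-!
Writing `V z = z² - (y₁ + y₂) z + y₂ y₁ = (z - y₁) z - y₂ (z - y₁)`, the point `x₁ = y₁` is
a root outright, and `x₂` is a root because `y₂` is the conjugate of `x₂` by `x₂ - x₁`, so that
`y₂ (x₂ - x₁) = (x₂ - x₁) x₂`. These two roots say that the coefficient row `(y₁ + y₂, -y₂ y₁)`
times the Vandermonde matrix `[[x₁, x₂], [1, 1]]` is `(x₁², x₂²)`; multiplying on the right by
a right inverse `B` identifies that row with `(x₁², x₂²) B`, which is the quasideterminant formula.
-/

open Matrix

theorem Matrix.vecMul_eq_of_mul_eq_one {n α : Type*} [Fintype n] [DecidableEq n] [Semiring α]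
    {M B : Matrix n n α} (hMB : M * B = 1) {u v : n → α} (huv : u ᵥ* M = v) : v ᵥ* B = u := by
  rw [← huv, vecMul_vecMul, hMB, vecMul_one]

section LeftQuadratic

variable {R : Type*} [Ring R]

theorem sq_sub_add_mul_add_mul_eq (y₁ y₂ z : R) :
    z ^ 2 - (y₁ + y₂) * z + y₂ * y₁ = (z - y₁) * z - y₂ * (z - y₁) := by
  noncomm_ring

theorem sq_sub_add_mul_add_mul_eq_zero_iff (y₁ y₂ z : R) :
    z ^ 2 - (y₁ + y₂) * z + y₂ * y₁ = 0 ↔ (z - y₁) * z = y₂ * (z - y₁) := by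
  rw [sq_sub_add_mul_add_mul_eq, sub_eq_zero]

theorem sq_eq_of_sq_sub_add_mul_add_mul_eq_zero {y₁ y₂ z : R}
    (h : z ^ 2 - (y₁ + y₂) * z + y₂ * y₁ = 0) : (y₁ + y₂) * z + -(y₂ * y₁) = z ^ 2 := by
  calc (y₁ + y₂) * z + -(y₂ * y₁) = z ^ 2 - (z ^ 2 - (y₁ + y₂) * z + y₂ * y₁) := by noncomm_ring
    _ = z ^ 2 := by rw [h, sub_zero]

theorem vecMul_vandermonde_two {a b x₁ x₂ : R} (h₁ : a * x₁ + b = x₁ ^ 2)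
    (h₂ : a * x₂ + b = x₂ ^ 2) : ![a, b] ᵥ* !![x₁, x₂; 1, 1] = ![x₁ ^ 2, x₂ ^ 2] := by
  ext j
  fin_cases j <;> simp [vecMul, dotProduct, h₁, h₂]

end LeftQuadratic

theorem vandermonde_quasideterminant_deg2_general (R : Type*) [Ring R] (x1 x2 : R)
    [Invertible (x2 - x1)] (B : Matrix (Fin 2) (Fin 2) R)
    (hB1 : (!![x1, x2; 1, 1] : Matrix (Fin 2) (Fin 2) R) * B = 1) :
    (x1 ^ 2 - (x1 + (x2 - x1) * x2 * ⅟(x2 - x1)) * x1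
        + (x2 - x1) * x2 * ⅟(x2 - x1) * x1 = 0) ∧
    (x2 ^ 2 - (x1 + (x2 - x1) * x2 * ⅟(x2 - x1)) * x2
        + (x2 - x1) * x2 * ⅟(x2 - x1) * x1 = 0) ∧
    (∀ z : R,
      z ^ 2 - (x1 + (x2 - x1) * x2 * ⅟(x2 - x1)) * z
          + (x2 - x1) * x2 * ⅟(x2 - x1) * x1
        = z ^ 2 - (x1 ^ 2 * (B 0 0 * z + B 0 1) + x2 ^ 2 * (B 1 0 * z + B 1 1))) := by
  set y₂ := (x2 - x1) * x2 * ⅟(x2 - x1)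
  have hroot₁ : x1 ^ 2 - (x1 + y₂) * x1 + y₂ * x1 = 0 :=
    (sq_sub_add_mul_add_mul_eq_zero_iff _ _ _).2 (by simp)
  have hroot₂ : x2 ^ 2 - (x1 + y₂) * x2 + y₂ * x1 = 0 :=
    (sq_sub_add_mul_add_mul_eq_zero_iff _ _ _).2 (invOf_mul_cancel_right _ _).symm
  have hcoeff : ![x1 ^ 2, x2 ^ 2] ᵥ* B = ![x1 + y₂, -(y₂ * x1)] :=
    vecMul_eq_of_mul_eq_one hB1 <| vecMul_vandermonde_two
      (sq_eq_of_sq_sub_add_mul_add_mul_eq_zero hroot₁)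
      (sq_eq_of_sq_sub_add_mul_add_mul_eq_zero hroot₂)
  have hcoeff₀ := congrFun hcoeff 0
  have hcoeff₁ := congrFun hcoeff 1
  simp only [vecMul, dotProduct, Fin.sum_univ_two, cons_val_zero, cons_val_one] at hcoeff₀ hcoeff₁
  refine ⟨hroot₁, hroot₂, fun z => ?_⟩
  calc z ^ 2 - (x1 + y₂) * z + y₂ * x1
      = z ^ 2 - ((x1 + y₂) * z + -(y₂ * x1)) := by noncomm_ring
    _ = z ^ 2 - (x1 ^ 2 * (B 0 0 * z + B 0 1) + x2 ^ 2 * (B 1 0 * z + B 1 1)) := by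
      rw [← hcoeff₀, ← hcoeff₁]
      noncomm_ring

/-- Noncommutative Vandermonde factorization for degree 2: with `y₁ = x₁`,
`y₂ = (x₂-x₁)x₂(x₂-x₁)⁻¹` and `V z = z² - (y₁+y₂)z + y₂y₁`, one has
`V x₁ = 0`, `V x₂ = 0`, and `V z` agrees with the Vandermonde quasideterminant
`z² - (x₁², x₂²)·[[x₁,x₂],[1,1]]⁻¹·(z,1)ᵀ`. -/
theorem vandermonde_quasideterminant_deg2 (R : Type*) [Ring R] (x1 x2 : R)
    [Invertible (x2 - x1)] (B : Matrix (Fin 2) (Fin 2) R)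
    (hB1 : (!![x1, x2; 1, 1] : Matrix (Fin 2) (Fin 2) R) * B = 1)
    (hB2 : B * (!![x1, x2; 1, 1] : Matrix (Fin 2) (Fin 2) R) = 1) :
    (x1 ^ 2 - (x1 + (x2 - x1) * x2 * ⅟(x2 - x1)) * x1
        + (x2 - x1) * x2 * ⅟(x2 - x1) * x1 = 0) ∧
    (x2 ^ 2 - (x1 + (x2 - x1) * x2 * ⅟(x2 - x1)) * x2
        + (x2 - x1) * x2 * ⅟(x2 - x1) * x1 = 0) ∧
    (∀ z : R,
      z ^ 2 - (x1 + (x2 - x1) * x2 * ⅟(x2 - x1)) * z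
          + (x2 - x1) * x2 * ⅟(x2 - x1) * x1
        = z ^ 2 - (x1 ^ 2 * (B 0 0 * z + B 0 1) + x2 ^ 2 * (B 1 0 * z + B 1 1))) :=
  vandermonde_quasideterminant_deg2_general R x1 x2 B hB1
end

section
/- Main theorem (noncommutative spectral decomposition identity): let x₁,...,xₙ, z ∈ R with the Vandermonde matrix X = (x_j^{n-i})_{i,j} invertible, and define f₁,...,fₙ by X^{-1}(z^{n-1},...,1)^T. If z^n = x₁^n f₁(z) + ... + xₙ^n fₙ(z), then for every m ≥ 0, z^m = x₁^m f₁(z) + ... + xₙ^m fₙ(z). -/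
/-!
The sequences `m ↦ z ^ m` and `m ↦ ∑ i, x i ^ m * f_i(z)` satisfy one and the same order-`n`
linear recurrence with left coefficients `a = (x₁ⁿ, …, xₙⁿ) Y`: for the powers of each `x i`
this is `Y X = 1`, for the powers of `z` it is the hypothesis on `zⁿ`, and powers of a single
element commute with each other. The two sequences agree on `0, …, n - 1` by `X Y = 1`, so
they agree everywhere.
-/

open Matrix

section Recurrence

variable {R : Type*} [Semiring R] {n : ℕ}

/-- The coefficient `a k` multiplies the term `n - 1 - k` places back, matching the rows
`x ^ (n - 1 - k)` of the Vandermonde matrix. -/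
def SatisfiesLeftRecurrence (a : Fin n → R) (u : ℕ → R) : Prop :=
  ∀ m, u (n + m) = ∑ k : Fin n, a k * u (n - 1 - k + m)

theorem satisfiesLeftRecurrence_pow {a : Fin n → R} {t : R}
    (ht : t ^ n = ∑ k : Fin n, a k * t ^ (n - 1 - k)) :
    SatisfiesLeftRecurrence a (t ^ ·) := by
  intro m
  simp only [pow_add, ht, Finset.sum_mul, mul_assoc]

theorem SatisfiesLeftRecurrence.sum_mul {ι : Type*} [Fintype ι] {a : Fin n → R}
    {u : ι → ℕ → R} (hu : ∀ i, SatisfiesLeftRecurrence a (u i)) (c : ι → R) :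
    SatisfiesLeftRecurrence a (fun m => ∑ i, u i m * c i) := by
  intro m
  simp only [hu _ m, Finset.sum_mul, Finset.mul_sum, mul_assoc]
  exact Finset.sum_comm

theorem SatisfiesLeftRecurrence.eq {a : Fin n → R} {u v : ℕ → R}
    (hu : SatisfiesLeftRecurrence a u) (hv : SatisfiesLeftRecurrence a v)
    (h : ∀ m < n, u m = v m) : u = v := by
  funext m
  induction m using Nat.strong_induction_on with
  | _ m ih =>
    rcases lt_or_ge m n with hm | hm
    · exact h m hm
    · obtain ⟨m, rfl⟩ := Nat.exists_eq_add_of_le hm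
      rw [hu, hv]
      exact Finset.sum_congr rfl fun k _ => by rw [ih _ (by omega)]

end Recurrence

section Vandermonde

variable {R : Type*} [Ring R] {n : ℕ}

def powVec (n : ℕ) (t : R) : Fin n → R := fun k => t ^ (n - 1 - k)

theorem mulVec_powVec_of_mul_eq_one {x : Fin n → R} {Y : Matrix (Fin n) (Fin n) R}
    (hYX : Y * Matrix.of (fun k j => powVec n (x j) k) = 1) (i : Fin n) :
    Y *ᵥ powVec n (x i) = Pi.single i 1 := by
  ext j
  simpa [Matrix.mul_apply, mulVec, dotProduct, Matrix.one_apply, Pi.single_apply, eq_comm]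
    using congrFun (congrFun hYX j) i

theorem pow_eq_sum_of_mul_eq_one {x : Fin n → R} {Y : Matrix (Fin n) (Fin n) R}
    (hXY : Matrix.of (fun k j => powVec n (x j) k) * Y = 1) (t : R) {p : ℕ} (hp : p < n) :
    t ^ p = ∑ j, x j ^ p * (Y *ᵥ powVec n t) j := by
  have hk : n - 1 - (n - 1 - p) = p := by omega
  have := congrFun (congrArg (· *ᵥ powVec n t) hXY) ⟨n - 1 - p, by omega⟩
  rw [← mulVec_mulVec, one_mulVec] at this
  simpa [mulVec, dotProduct, powVec, hk] using this.symm

end Vandermonde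

/-- Main theorem (noncommutative spectral decomposition identity): with the
Vandermonde matrix `X = (x_j^{n-i})` invertible (two-sided inverse `Y`) and
`f_i(z) = Σ_k Y i k · z^{n-1-k}`, if `zⁿ = Σ_i x_iⁿ f_i(z)` then
`z^m = Σ_i x_i^m f_i(z)` for every `m ≥ 0`. -/
theorem noncomm_spectral_decomposition (R : Type*) [Ring R] (n : ℕ)
    (x : Fin n → R) (z : R) (Y : Matrix (Fin n) (Fin n) R)
    (hY1 : (Matrix.of fun i j : Fin n => x j ^ (n - 1 - i.val)) * Y = 1)
    (hY2 : Y * (Matrix.of fun i j : Fin n => x j ^ (n - 1 - i.val)) = 1)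
    (hn : z ^ n = ∑ i : Fin n, x i ^ n * (∑ k : Fin n, Y i k * z ^ (n - 1 - k.val))) :
    ∀ m : ℕ, z ^ m = ∑ i : Fin n, x i ^ m * (∑ k : Fin n, Y i k * z ^ (n - 1 - k.val)) := by
  set a := (fun j => x j ^ n) ᵥ* Y
  have hx (i : Fin n) : x i ^ n = a ⬝ᵥ powVec n (x i) := by
    rw [← dotProduct_mulVec, mulVec_powVec_of_mul_eq_one hY2, dotProduct_single, mul_one]
  have hz : z ^ n = a ⬝ᵥ powVec n z := by
    rw [← dotProduct_mulVec]
    exact hn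
  have hrec := (satisfiesLeftRecurrence_pow hz).eq
    (SatisfiesLeftRecurrence.sum_mul (fun i => satisfiesLeftRecurrence_pow (hx i))
      (Y *ᵥ powVec n z))
    (fun p hp => pow_eq_sum_of_mul_eq_one hY1 z hp)
  exact congrFun hrec
end

section
/- Main theorem, degree 2 case: let x₁, x₂, z ∈ R with x₁-x₂ invertible, f₁(z) = (x₁-x₂)^{-1}(z-x₂), f₂(z) = (x₂-x₁)^{-1}(z-x₁). If z² = x₁²f₁(z) + x₂²f₂(z), then z^m = x₁^m f₁(z) + x₂^m f₂(z) for all m ≥ 0. -/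
/-!
The Lagrange coefficients `fᵢ = ⅟(xᵢ - xⱼ) * (z - xⱼ)` satisfy `f₁ + f₂ = 1` and
`x₁ f₁ + x₂ f₂ = z`. With these, the degree-2 hypothesis turns into `fᵢ z = xᵢ fᵢ`, hence
`fᵢ zᵐ = xᵢᵐ fᵢ`, and multiplying `f₁ + f₂ = 1` on the right by `zᵐ` gives the decomposition.
-/

theorem pow_eq_add_of_semiconjBy {M : Type*} [Semiring M] {p q z a b : M} (hpq : p + q = 1)
    (hp : SemiconjBy p z a) (hq : SemiconjBy q z b) (m : ℕ) :
    z ^ m = a ^ m * p + b ^ m * q := by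
  rw [← (hp.pow_right m).eq, ← (hq.pow_right m).eq, ← add_mul, hpq, one_mul]

section Lagrange

variable {R : Type*} [Ring R] (x y z : R) [Invertible (x - y)] [Invertible (y - x)]

theorem invOf_sub_comm : ⅟(y - x) = -⅟(x - y) :=
  invOf_eq_right_inv (by rw [← neg_sub, neg_mul_neg, mul_invOf_self])

theorem lagrange_add_lagrange : ⅟(x - y) * (z - y) + ⅟(y - x) * (z - x) = 1 := by
  rw [invOf_sub_comm x y, neg_mul, ← sub_eq_add_neg, ← mul_sub, sub_sub_sub_cancel_left,
    invOf_mul_self]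

theorem mul_lagrange_add_mul_lagrange :
    x * (⅟(x - y) * (z - y)) + y * (⅟(y - x) * (z - x)) = z := by
  calc x * (⅟(x - y) * (z - y)) + y * (⅟(y - x) * (z - x))
      = (x - y) * (⅟(x - y) * (z - y)) + y * (⅟(x - y) * (z - y) + ⅟(y - x) * (z - x)) := by
        noncomm_ring
    _ = z := by
        rw [mul_invOf_cancel_left, lagrange_add_lagrange, mul_one, sub_add_cancel]

theorem semiconjBy_lagrange
    (h : z ^ 2 = x ^ 2 * (⅟(x - y) * (z - y)) + y ^ 2 * (⅟(y - x) * (z - x))) :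
    SemiconjBy (⅟(x - y) * (z - y)) z x := by
  have key : (x - y) * (x * (⅟(x - y) * (z - y))) = z ^ 2 - y * z := by
    calc (x - y) * (x * (⅟(x - y) * (z - y)))
        = (x ^ 2 * (⅟(x - y) * (z - y)) + y ^ 2 * (⅟(y - x) * (z - x)))
          - y * (x * (⅟(x - y) * (z - y)) + y * (⅟(y - x) * (z - x))) := by noncomm_ring
      _ = z ^ 2 - y * z := by rw [mul_lagrange_add_mul_lagrange, h]
  calc ⅟(x - y) * (z - y) * z = ⅟(x - y) * ((x - y) * (x * (⅟(x - y) * (z - y)))) := by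
        rw [key, mul_assoc, sub_mul, sq]
    _ = x * (⅟(x - y) * (z - y)) := invOf_mul_cancel_left _ _

end Lagrange

/-- Main theorem, degree 2 case: with `f₁(z) = (x₁-x₂)⁻¹(z-x₂)`,
`f₂(z) = (x₂-x₁)⁻¹(z-x₁)`, if `z² = x₁²f₁(z) + x₂²f₂(z)` then
`z^m = x₁^m f₁(z) + x₂^m f₂(z)` for all `m ≥ 0`. -/
theorem noncomm_spectral_decomposition_deg2 (R : Type*) [Ring R] (x1 x2 z : R)
    [Invertible (x1 - x2)] [Invertible (x2 - x1)]
    (h2 : z ^ 2 = x1 ^ 2 * (⅟(x1 - x2) * (z - x2)) + x2 ^ 2 * (⅟(x2 - x1) * (z - x1))) :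
    ∀ m : ℕ,
      z ^ m = x1 ^ m * (⅟(x1 - x2) * (z - x2)) + x2 ^ m * (⅟(x2 - x1) * (z - x1)) :=
  pow_eq_add_of_semiconjBy (lagrange_add_lagrange x1 x2 z) (semiconjBy_lagrange x1 x2 z h2)
    (semiconjBy_lagrange x2 x1 z (by rw [h2, add_comm]))
end

section
/- Recursion identity for Vandermonde quasideterminants, degree 2: with V_m := z^m - (x₁^m f₁(z) + x₂^m f₂(z)), where f₁(z) = (x₁-x₂)^{-1}(z-x₂), f₂(z) = (x₂-x₁)^{-1}(z-x₁), one has V_{m-1}·z = V_m - (x₂^{m-1}-x₁^{m-1})(x₂-x₁)^{-1}·V₂ for all m ≥ 2. -/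
/-!
Put `f₁ = (x₁-x₂)⁻¹(z-x₂)`, `f₂ = (x₂-x₁)⁻¹(z-x₁)` and `dᵢ = fᵢ z - xᵢ fᵢ`. Then
`V (m+1) - V m · z = x₁^m d₁ + x₂^m d₂`. Since `f₁ + f₂ = 1` and `x₁ f₁ + x₂ f₂ = z`
(so `V 1 = 0`), we get `d₁ + d₂ = 0`, and the case `m = 1` gives `V 2 = (x₂ - x₁) d₂`.
Hence `d₂ = -d₁ = (x₂-x₁)⁻¹ V 2`. No commutativity is needed.
-/

section InterpolationError

variable {R : Type*} [Ring R]

def interpolationError (x₁ x₂ f₁ f₂ z : R) (m : ℕ) : R :=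
  z ^ m - (x₁ ^ m * f₁ + x₂ ^ m * f₂)

variable {x₁ x₂ f₁ f₂ z : R}

theorem interpolationError_succ_sub_mul (m : ℕ) :
    interpolationError x₁ x₂ f₁ f₂ z (m + 1) - interpolationError x₁ x₂ f₁ f₂ z m * z =
      x₁ ^ m * (f₁ * z - x₁ * f₁) + x₂ ^ m * (f₂ * z - x₂ * f₂) := by
  simp only [interpolationError, pow_succ]
  noncomm_ring

theorem interpolationError_one (h₁ : x₁ * f₁ + x₂ * f₂ = z) :
    interpolationError x₁ x₂ f₁ f₂ z 1 = 0 := by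
  simp [interpolationError, h₁]

theorem defect_add_defect_eq_zero (h₀ : f₁ + f₂ = 1) (h₁ : x₁ * f₁ + x₂ * f₂ = z) :
    (f₁ * z - x₁ * f₁) + (f₂ * z - x₂ * f₂) = 0 := by
  calc (f₁ * z - x₁ * f₁) + (f₂ * z - x₂ * f₂) = (f₁ + f₂) * z - (x₁ * f₁ + x₂ * f₂) := by
        noncomm_ring
    _ = 0 := by rw [h₀, h₁, one_mul, sub_self]

theorem sub_mul_defect_eq_interpolationError_two (h₀ : f₁ + f₂ = 1) (h₁ : x₁ * f₁ + x₂ * f₂ = z) :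
    (x₂ - x₁) * (f₂ * z - x₂ * f₂) = interpolationError x₁ x₂ f₁ f₂ z 2 := by
  have hd₁ : f₁ * z - x₁ * f₁ = -(f₂ * z - x₂ * f₂) :=
    eq_neg_of_add_eq_zero_left (defect_add_defect_eq_zero h₀ h₁)
  have h₂ := interpolationError_succ_sub_mul (x₁ := x₁) (x₂ := x₂) (f₁ := f₁) (f₂ := f₂) (z := z) 1
  rw [interpolationError_one h₁, zero_mul, sub_zero, hd₁] at h₂
  rw [h₂]
  noncomm_ring

theorem interpolationError_mul_eq (h₀ : f₁ + f₂ = 1) (h₁ : x₁ * f₁ + x₂ * f₂ = z)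
    [Invertible (x₂ - x₁)] (m : ℕ) :
    interpolationError x₁ x₂ f₁ f₂ z m * z = interpolationError x₁ x₂ f₁ f₂ z (m + 1) -
      (x₂ ^ m - x₁ ^ m) * ⅟(x₂ - x₁) * interpolationError x₁ x₂ f₁ f₂ z 2 := by
  have hd₂ : f₂ * z - x₂ * f₂ = ⅟(x₂ - x₁) * interpolationError x₁ x₂ f₁ f₂ z 2 := by
    rw [← sub_mul_defect_eq_interpolationError_two h₀ h₁, invOf_mul_cancel_left]
  have hd₁ : f₁ * z - x₁ * f₁ = -(f₂ * z - x₂ * f₂) :=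
    eq_neg_of_add_eq_zero_left (defect_add_defect_eq_zero h₀ h₁)
  rw [eq_sub_iff_add_eq, ← eq_sub_iff_add_eq', interpolationError_succ_sub_mul, hd₁, hd₂]
  noncomm_ring

end InterpolationError

section LagrangeBasis

variable {R : Type*} [Ring R] {x₁ x₂ : R} [Invertible (x₁ - x₂)] [Invertible (x₂ - x₁)]

theorem invOf_sub_eq_neg_invOf_sub : ⅟(x₁ - x₂) = -⅟(x₂ - x₁) :=
  invOf_eq_right_inv (by rw [mul_neg, ← neg_mul, neg_sub, mul_invOf_self])

theorem lagrangeBasis_add (z : R) :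
    ⅟(x₁ - x₂) * (z - x₂) + ⅟(x₂ - x₁) * (z - x₁) = 1 := by
  calc ⅟(x₁ - x₂) * (z - x₂) + ⅟(x₂ - x₁) * (z - x₁)
      = ⅟(x₂ - x₁) * (x₂ - x₁) := by rw [invOf_sub_eq_neg_invOf_sub]; noncomm_ring
    _ = 1 := invOf_mul_self _

theorem lagrangeBasis_nodes_add (z : R) :
    x₁ * (⅟(x₁ - x₂) * (z - x₂)) + x₂ * (⅟(x₂ - x₁) * (z - x₁)) = z := by
  set u := ⅟(x₂ - x₁)
  rw [invOf_sub_eq_neg_invOf_sub, ← sub_eq_zero]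
  calc x₁ * (-u * (z - x₂)) + x₂ * (u * (z - x₁)) - z
      = x₁ * (u * (x₂ - x₁) - 1) + ((x₂ - x₁) * u - 1) * (z - x₁) := by noncomm_ring
    _ = 0 := by rw [invOf_mul_self, mul_invOf_self, sub_self, mul_zero, zero_mul, add_zero]

end LagrangeBasis

/-- Recursion identity for degree-2 Vandermonde quasideterminants: with
`V m = z^m - (x₁^m f₁(z) + x₂^m f₂(z))`, `f₁(z) = (x₁-x₂)⁻¹(z-x₂)`,
`f₂(z) = (x₂-x₁)⁻¹(z-x₁)`, one has
`V (m-1) · z = V m - (x₂^{m-1} - x₁^{m-1})(x₂-x₁)⁻¹ · V 2` for all `m ≥ 2`. -/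
theorem vandermonde_recursion_deg2 (R : Type*) [Ring R] (x1 x2 z : R)
    [Invertible (x1 - x2)] [Invertible (x2 - x1)]
    (V : ℕ → R)
    (hV : ∀ m : ℕ, V m = z ^ m -
      (x1 ^ m * (⅟(x1 - x2) * (z - x2)) + x2 ^ m * (⅟(x2 - x1) * (z - x1)))) :
    ∀ m : ℕ, 2 ≤ m →
      V (m - 1) * z = V m - (x2 ^ (m - 1) - x1 ^ (m - 1)) * ⅟(x2 - x1) * V 2 := by
  intro m hm
  obtain ⟨k, rfl⟩ : ∃ k, m = k + 1 := ⟨m - 1, by omega⟩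
  obtain rfl : V = interpolationError x1 x2 _ _ z := funext hV
  exact interpolationError_mul_eq (lagrangeBasis_add z) (lagrangeBasis_nodes_add z) k
end

section
/- With A = √2·[[0,a,0],[a†,0,a],[0,a†,0]] where [a,a†]=1 and N = a†a, A satisfies the noncommutative Cayley–Hamilton identity A³ = 2·diag(2N+3, 2N+1, 2N-1)·A, i.e. the first row of A³ - 2(2N+3)A vanishes, the second row of A³ - 2(2N+1)A vanishes, and the third row of A³ - 2(2N-1)A vanishes. -/
/-!
Write `A = √2 • B`. As `√2` is central, `A³ = 2√2 • B³`, so the claim reduces to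
`B³ = diag(2N+3, 2N+1, 2N-1) · B`. The only nonzero entries of `B³` are sums of cubic words in
`a, a†`; putting them in normal order (all `a†` left of all `a`) with `a a† = a† a + 1` turns each
into the corresponding `(2N+k) a` or `(2N+k) a†`.
-/

open Matrix

section Oscillator

variable {R : Type*} [Ring R]

def oscillatorMatrix (a ad : R) : Matrix (Fin 3) (Fin 3) R :=
  !![0, a, 0; ad, 0, a; 0, ad, 0]

variable {a ad : R}

theorem mul_mul_eq_of_commutator_eq_one (h : a * ad - ad * a = 1) (x : R) :
    a * (ad * x) = ad * (a * x) + x := by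
  rw [← mul_assoc, eq_add_of_sub_eq' h, add_mul, one_mul, mul_assoc]

theorem oscillatorMatrix_pow_three (h : a * ad - ad * a = 1) :
    oscillatorMatrix a ad ^ 3 =
      diagonal ![2 * (ad * a) + 3, 2 * (ad * a) + 1, 2 * (ad * a) - 1] * oscillatorMatrix a ad := by
  rw [pow_three]
  ext i j
  fin_cases i <;> fin_cases j <;> simp [oscillatorMatrix, mul_apply, Fin.sum_univ_three]
  all_goals
    simp only [mul_add, add_mul, sub_mul, mul_assoc, eq_add_of_sub_eq' h,
      mul_mul_eq_of_commutator_eq_one h, mul_one]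
    noncomm_ring

end Oscillator

theorem smul_pow_three_of_pow_three_eq_mul {S M : Type*} [CommMonoid S] [Monoid M] [MulAction S M]
    [IsScalarTower S M M] [SMulCommClass S M M] (c : S) {B D : M}
    (hB : B ^ 3 = D * B) : (c • B) ^ 3 = (c ^ 2 • D) * (c • B) := by
  rw [smul_pow, hB, smul_mul_smul, ← pow_succ]

/-- Noncommutative Cayley–Hamilton identity for the oscillator matrix:
with `[a, a†] = 1`, `N = a†a`, `A = √2·[[0,a,0],[a†,0,a],[0,a†,0]]`, one has
`A³ = 2·diag(2N+3, 2N+1, 2N-1)·A`; in particular each row of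
`A³ - 2(2N+2k+1)A` (with the appropriate shift per row) vanishes. -/
theorem oscillator_cayley_hamilton (R : Type*) [Ring R] [Algebra ℝ R] (a ad : R)
    (h : a * ad - ad * a = 1) :
    let N : R := ad * a
    let A : Matrix (Fin 3) (Fin 3) R :=
      (Real.sqrt 2) • !![0, a, 0; ad, 0, a; 0, ad, 0]
    (A ^ 3 = Matrix.diagonal ![2 * (2 * N + 3), 2 * (2 * N + 1), 2 * (2 * N - 1)] * A) ∧
    (∀ j : Fin 3, (A ^ 3) 0 j - 2 * (2 * N + 3) * A 0 j = 0) ∧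
    (∀ j : Fin 3, (A ^ 3) 1 j - 2 * (2 * N + 1) * A 1 j = 0) ∧
    (∀ j : Fin 3, (A ^ 3) 2 j - 2 * (2 * N - 1) * A 2 j = 0) := by
  intro N A
  have hcube : A ^ 3 = diagonal ![2 * (2 * N + 3), 2 * (2 * N + 1), 2 * (2 * N - 1)] * A := by
    change (√2 • oscillatorMatrix a ad) ^ 3 = _ * (√2 • oscillatorMatrix a ad)
    rw [smul_pow_three_of_pow_three_eq_mul _ (oscillatorMatrix_pow_three h),
      Real.sq_sqrt zero_le_two, ← diagonal_smul]
    simp only [smul_vec3, ofNat_smul_eq_nsmul ℝ 2, nsmul_eq_mul, Nat.cast_ofNat, N]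
  refine ⟨hcube, ?_, ?_, ?_⟩ <;> intro j <;> simp [hcube, diagonal_mul]
end

section
/- Noncommutative spectral projections for the oscillator matrix: with A as above, x = diag(λ(N), λ(N-1), λ(N-2)) a diagonal matrix where λ(N)² = 2(2N+3) (assume each 2(2N+3), 2(2N+1), 2(2N-1) has an invertible square root commuting with N), define P₁ = (2x²)^{-1}A² + (2x)^{-1}A, P₂ = I - x^{-2}A², P₃ = (2x²)^{-1}A² - (2x)^{-1}A. Then P₁+P₂+P₃ = I, P_iP_j = δ_{ij}P_i, and A = x P₁ - x P₃, so that A^m = x^m P₁ + 0^m P₂ + (-x)^m P₃ for all m ≥ 1. -/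
set_option maxHeartbeats 1600000 in
/-- Noncommutative spectral projections for the oscillator matrix: with
`[a,a†]=1`, `N = a†a`, `A = √2·[[0,a,0],[a†,0,a],[0,a†,0]]`, and
`x = diag(λ₀, λ₁, λ₂)` where `λ₀² = 2(2N+3)`, `λ₁² = 2(2N+1)`, `λ₂² = 2(2N-1)`,
each `λᵢ` invertible, commuting with `N` and intertwining `a`, `a†` as shifts
of a function of `N`, the matrices `P₁ = (2x²)⁻¹A² + (2x)⁻¹A`,
`P₂ = I - x⁻²A²`, `P₃ = (2x²)⁻¹A² - (2x)⁻¹A` satisfy `P₁+P₂+P₃ = I`,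
`PᵢPⱼ = δᵢⱼPᵢ`, `A = xP₁ - xP₃`, and `A^m = x^m P₁ + (-x)^m P₃` for `m ≥ 1`. -/
theorem oscillator_spectral_projections (R : Type*) [Ring R] [Algebra ℝ R]
    (a ad l0 l1 l2 : R) (h : a * ad - ad * a = 1)
    [Invertible l0] [Invertible l1] [Invertible l2]
    (hl0 : l0 ^ 2 = 2 * (2 * (ad * a) + 3))
    (hl1 : l1 ^ 2 = 2 * (2 * (ad * a) + 1))
    (hl2 : l2 ^ 2 = 2 * (2 * (ad * a) - 1))
    (hc0 : l0 * (ad * a) = (ad * a) * l0)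
    (hc1 : l1 * (ad * a) = (ad * a) * l1)
    (hc2 : l2 * (ad * a) = (ad * a) * l2)
    (hs1 : a * l1 = l0 * a) (hs2 : a * l2 = l1 * a)
    (hs3 : ad * l0 = l1 * ad) (hs4 : ad * l1 = l2 * ad) :
    let A : Matrix (Fin 3) (Fin 3) R :=
      (Real.sqrt 2) • !![0, a, 0; ad, 0, a; 0, ad, 0]
    let x : Matrix (Fin 3) (Fin 3) R := Matrix.diagonal ![l0, l1, l2]
    let P1 : Matrix (Fin 3) (Fin 3) R :=
      ((1/2 : ℝ) • Matrix.diagonal ![(⅟l0 * ⅟l0), (⅟l1 * ⅟l1), (⅟l2 * ⅟l2)]) * A ^ 2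
        + ((1/2 : ℝ) • Matrix.diagonal ![⅟l0, ⅟l1, ⅟l2]) * A
    let P2 : Matrix (Fin 3) (Fin 3) R :=
      1 - Matrix.diagonal ![(⅟l0 * ⅟l0), (⅟l1 * ⅟l1), (⅟l2 * ⅟l2)] * A ^ 2
    let P3 : Matrix (Fin 3) (Fin 3) R :=
      ((1/2 : ℝ) • Matrix.diagonal ![(⅟l0 * ⅟l0), (⅟l1 * ⅟l1), (⅟l2 * ⅟l2)]) * A ^ 2
        - ((1/2 : ℝ) • Matrix.diagonal ![⅟l0, ⅟l1, ⅟l2]) * A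
    (P1 + P2 + P3 = 1) ∧
    (P1 * P1 = P1) ∧ (P2 * P2 = P2) ∧ (P3 * P3 = P3) ∧
    (P1 * P2 = 0) ∧ (P2 * P1 = 0) ∧ (P1 * P3 = 0) ∧ (P3 * P1 = 0) ∧
    (P2 * P3 = 0) ∧ (P3 * P2 = 0) ∧
    (A = x * P1 - x * P3) ∧
    (∀ m : ℕ, 1 ≤ m → A ^ m = x ^ m * P1 + (-x) ^ m * P3) := by
  
  intro A x P1 P2 P3
  -- basic CCR scalar lemmas
  have h1 : a * ad = ad * a + 1 := by rw [← h]; noncomm_ring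
  have hco : ∀ y : R, a * (ad * y) = ad * (a * y) + y := by
    intro y; rw [← mul_assoc, h1]; noncomm_ring
  -- inverse shift relations
  have hs1' : a * ⅟l1 = ⅟l0 * a := by
    have h' : ⅟l0 * ((l0 * a) * ⅟l1) = ⅟l0 * ((a * l1) * ⅟l1) := by rw [hs1]
    simpa [mul_assoc] using h'
  have hs2' : a * ⅟l2 = ⅟l1 * a := by
    have h' : ⅟l1 * ((l1 * a) * ⅟l2) = ⅟l1 * ((a * l2) * ⅟l2) := by rw [hs2]
    simpa [mul_assoc] using h'
  have hs3' : ad * ⅟l0 = ⅟l1 * ad := by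
    have h' : ⅟l1 * ((l1 * ad) * ⅟l0) = ⅟l1 * ((ad * l0) * ⅟l0) := by rw [hs3]
    simpa [mul_assoc] using h'
  have hs4' : ad * ⅟l1 = ⅟l2 * ad := by
    have h' : ⅟l2 * ((l2 * ad) * ⅟l1) = ⅟l2 * ((ad * l1) * ⅟l1) := by rw [hs4]
    simpa [mul_assoc] using h'
  -- named matrices
  set M : Matrix (Fin 3) (Fin 3) R := !![0, a, 0; ad, 0, a; 0, ad, 0] with hM
  set E : Matrix (Fin 3) (Fin 3) R := Matrix.diagonal ![⅟l0, ⅟l1, ⅟l2] with hE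
  set D2 : Matrix (Fin 3) (Fin 3) R :=
    Matrix.diagonal ![(⅟l0 * ⅟l0), (⅟l1 * ⅟l1), (⅟l2 * ⅟l2)] with hD2
  have hA : A = (Real.sqrt 2) • M := rfl
  have hxd : x = Matrix.diagonal ![l0, l1, l2] := rfl
  have hP1d : P1 = ((1/2 : ℝ) • D2) * A ^ 2 + ((1/2 : ℝ) • E) * A := rfl
  have hP2d : P2 = 1 - D2 * A ^ 2 := rfl
  have hP3d : P3 = ((1/2 : ℝ) • D2) * A ^ 2 - ((1/2 : ℝ) • E) * A := rfl
  clear_value A x P1 P2 P3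
  -- entrywise matrix lemmas
  have hMx : M * x = x * M := by
    rw [hxd, hM]
    ext i j
    fin_cases i <;> fin_cases j <;>
      simp [Matrix.mul_apply, Fin.sum_univ_three, Matrix.diagonal, hs1, hs2, hs3, hs4]
  have hME : M * E = E * M := by
    rw [hE, hM]
    ext i j
    fin_cases i <;> fin_cases j <;>
      simp [Matrix.mul_apply, Fin.sum_univ_three, Matrix.diagonal, hs1', hs2', hs3', hs4']
  have hxE : x * E = 1 := by
    rw [hxd, hE]
    ext i j
    fin_cases i <;> fin_cases j <;>
      simp [Matrix.mul_apply, Fin.sum_univ_three, Matrix.diagonal, Matrix.one_apply]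
  have hEx : E * x = 1 := by
    rw [hxd, hE]
    ext i j
    fin_cases i <;> fin_cases j <;>
      simp [Matrix.mul_apply, Fin.sum_univ_three, Matrix.diagonal, Matrix.one_apply]
  have hEE : E * E = D2 := by
    rw [hE, hD2]
    ext i j
    fin_cases i <;> fin_cases j <;>
      simp [Matrix.mul_apply, Fin.sum_univ_three, Matrix.diagonal]
  -- scalar helpers for the cubic identity
  have k0 : l0 * (l0 * a) = (2*(2*(ad*a)+3))*a := by rw [← mul_assoc, ← pow_two, hl0]
  have k1 : l1 * (l1 * ad) = (2*(2*(ad*a)+1))*ad := by rw [← mul_assoc, ← pow_two, hl1]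
  have k1a : l1 * (l1 * a) = (2*(2*(ad*a)+1))*a := by rw [← mul_assoc, ← pow_two, hl1]
  have k2 : l2 * (l2 * ad) = (2*(2*(ad*a)-1))*ad := by rw [← mul_assoc, ← pow_two, hl2]
  have key : M * (M * M) + M * (M * M) = x * (x * M) := by
    rw [hxd, hM]
    ext i j
    fin_cases i <;> fin_cases j <;>
      simp [Matrix.mul_apply, Fin.sum_univ_three, Matrix.diagonal]
    · rw [k0]; simp only [mul_add, add_mul, mul_sub, sub_mul, mul_assoc, hco, h1]; noncomm_ring
    · rw [k1]; simp only [mul_add, add_mul, mul_sub, sub_mul, mul_assoc, hco, h1]; noncomm_ring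
    · rw [k1a]; simp only [mul_add, add_mul, mul_sub, sub_mul, mul_assoc, hco, h1]; noncomm_ring
    · rw [k2]; simp only [mul_add, add_mul, mul_sub, sub_mul, mul_assoc, hco, h1]; noncomm_ring
  have hsq : Real.sqrt 2 * Real.sqrt 2 = 2 := Real.mul_self_sqrt (by norm_num)
  -- lift to A
  have hAx : A * x = x * A := by
    rw [hA, smul_mul_assoc, hMx, mul_smul_comm]
  have hAE : A * E = E * A := by
    rw [hA, smul_mul_assoc, hME, mul_smul_comm]
  have hA3 : A * (A * A) = x * (x * A) := by
    rw [hA]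
    calc (Real.sqrt 2 • M) * ((Real.sqrt 2 • M) * (Real.sqrt 2 • M))
        = Real.sqrt 2 • (Real.sqrt 2 • (Real.sqrt 2 • (M * (M * M)))) := by
          simp only [smul_mul_assoc, mul_smul_comm]
      _ = Real.sqrt 2 • ((Real.sqrt 2 * Real.sqrt 2) • (M * (M * M))) := by congr 1; rw [smul_smul]
      _ = Real.sqrt 2 • ((2:ℝ) • (M * (M * M))) := by rw [hsq]
      _ = Real.sqrt 2 • (M * (M * M) + M * (M * M)) := by rw [two_smul]
      _ = Real.sqrt 2 • (x * (x * M)) := by rw [key]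
      _ = x * (x * (Real.sqrt 2 • M)) := by simp only [mul_smul_comm]
  have hAE' : ∀ Z : Matrix (Fin 3) (Fin 3) R, A * (E * Z) = E * (A * Z) := by
    intro Z; rw [← mul_assoc, hAE, mul_assoc]
  have hExZ : ∀ Z : Matrix (Fin 3) (Fin 3) R, E * (x * Z) = Z := by
    intro Z; rw [← mul_assoc, hEx, one_mul]
  set B : Matrix (Fin 3) (Fin 3) R := E * A with hB
  have hxB : x * B = A := by rw [hB, ← mul_assoc, hxE, one_mul]
  have hBx : B * x = A := by rw [hB, mul_assoc, hAx, hExZ]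
  have hB3 : B * (B * B) = B := by
    have e1 : B * (B * B) = E * (E * (E * (A * (A * A)))) := by
      rw [hB]; simp only [mul_assoc, hAE']
    rw [e1, hA3]
    simp only [hExZ]; exact hB.symm
  set u : Matrix (Fin 3) (Fin 3) R := B * B with hu
  have hBu : B * u = B := hB3
  have huB : u * B = B := by rw [hu, mul_assoc]; exact hB3
  have huu : u * u = u := by
    have e : u * u = B * (B * u) := by rw [hu, mul_assoc]
    rw [e, hBu, ← hu]
  have hD2AA : D2 * (A * A) = u := by
    rw [← hEE, hu, hB, mul_assoc, mul_assoc, hAE']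
  -- projections in terms of B, u
  have hP1e : P1 = (1/2 : ℝ) • (u + B) := by
    rw [hP1d, sq, smul_mul_assoc, smul_mul_assoc, hD2AA, ← hB, smul_add]
  have hP2e : P2 = 1 - u := by
    rw [hP2d, sq, hD2AA]
  have hP3e : P3 = (1/2 : ℝ) • (u - B) := by
    rw [hP3d, sq, smul_mul_assoc, smul_mul_assoc, hD2AA, ← hB, smul_sub]
  refine ⟨?_, ?_, ?_, ?_, ?_, ?_, ?_, ?_, ?_, ?_, ?_, ?_⟩
  · rw [hP1e, hP2e, hP3e]; module
  · rw [hP1e]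
    simp only [smul_mul_assoc, mul_smul_comm, mul_add, add_mul, mul_sub, sub_mul,
      mul_one, one_mul, huu, huB, hBu, ← hu, smul_add, smul_sub]
    module
  · rw [hP2e]
    simp only [smul_mul_assoc, mul_smul_comm, mul_add, add_mul, mul_sub, sub_mul,
      mul_one, one_mul, huu, huB, hBu, ← hu, smul_add, smul_sub]
    module
  · rw [hP3e]
    simp only [smul_mul_assoc, mul_smul_comm, mul_add, add_mul, mul_sub, sub_mul,
      mul_one, one_mul, huu, huB, hBu, ← hu, smul_add, smul_sub]
    module
  · rw [hP1e, hP2e]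
    simp only [smul_mul_assoc, mul_smul_comm, mul_add, add_mul, mul_sub, sub_mul,
      mul_one, one_mul, huu, huB, hBu, ← hu, smul_add, smul_sub]
    module
  · rw [hP1e, hP2e]
    simp only [smul_mul_assoc, mul_smul_comm, mul_add, add_mul, mul_sub, sub_mul,
      mul_one, one_mul, huu, huB, hBu, ← hu, smul_add, smul_sub]
    module
  · rw [hP1e, hP3e]
    simp only [smul_mul_assoc, mul_smul_comm, mul_add, add_mul, mul_sub, sub_mul,
      mul_one, one_mul, huu, huB, hBu, ← hu, smul_add, smul_sub]
    module
  · rw [hP1e, hP3e]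
    simp only [smul_mul_assoc, mul_smul_comm, mul_add, add_mul, mul_sub, sub_mul,
      mul_one, one_mul, huu, huB, hBu, ← hu, smul_add, smul_sub]
    module
  · rw [hP2e, hP3e]
    simp only [smul_mul_assoc, mul_smul_comm, mul_add, add_mul, mul_sub, sub_mul,
      mul_one, one_mul, huu, huB, hBu, ← hu, smul_add, smul_sub]
    module
  · rw [hP2e, hP3e]
    simp only [smul_mul_assoc, mul_smul_comm, mul_add, add_mul, mul_sub, sub_mul,
      mul_one, one_mul, huu, huB, hBu, ← hu, smul_add, smul_sub]
    module
  · rw [hP1e, hP3e]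
    simp only [mul_smul_comm, mul_add, mul_sub, smul_add, smul_sub, hxB]
    module
  · intro m hm
    have hcomm : Commute x B := hxB.trans hBx.symm
    have hupow : ∀ n : ℕ, u ^ (n+1) = u := by
      intro n
      induction n with
      | zero => rw [pow_one]
      | succ j ih => rw [pow_succ, ih, huu]
    have hB2 : B ^ 2 = u := by rw [sq, ← hu]
    have hukB : ∀ n : ℕ, u ^ n * B = B := by
      intro n
      cases n with
      | zero => rw [pow_zero, one_mul]
      | succ j => rw [hupow j, huB]
    rw [hP1e, hP3e, show A = x * B from hxB.symm, hcomm.mul_pow]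
    rcases Nat.even_or_odd m with ⟨k, hk⟩ | ⟨k, hk⟩
    · subst hk
      obtain ⟨j, rfl⟩ : ∃ j, k = j + 1 := ⟨k - 1, by omega⟩
      have hBm : B ^ ((j+1) + (j+1)) = u := by
        rw [show (j+1) + (j+1) = 2 * (j+1) by ring, pow_mul, hB2, hupow]
      rw [hBm, Even.neg_pow ⟨j+1, rfl⟩]
      simp only [mul_smul_comm, mul_add, mul_sub, smul_add, smul_sub]
      module
    · subst hk
      have hBm : B ^ (2*k + 1) = B := by
        rw [pow_succ, pow_mul, hB2, hukB]
      rw [hBm, Odd.neg_pow ⟨k, rfl⟩]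
      simp only [neg_mul, mul_smul_comm, mul_add, mul_sub, smul_add, smul_sub]
      module
end
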